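/- arXiv:2105.03185 — 5 statements merged into one kernel-verified Lean document; each statement's English description precedes it below -/
import Mathlib

section
/- Let S be a nonempty finite type and let G be a real S×S matrix whose off-diagonal entries are nonnegative (G a b ≥ 0 whenever a ≠ b). Assume that every entry of the matrix exponential exp(G) is strictly positive, and that there is a constant C such that for every t ≥ 0 every entry of exp(t•G) has absolute value at most C. Then there exists a unique triple (λ, h, γ) such that λ ∈ ℝ with λ ≤ 0, h : S → ℝ and γ : S → ℝ are strictly positive, ∑_{a∈S} γ a = 1, ∑_{a∈S} h a * γ a = 1, G *ᵥ h = λ • h (h is a right eigenvector: for all a, ∑_b G a b * h b = λ * h a), and γ ᵥ* G = λ • γ (γ is a left eigenvector: for all b, ∑_a γ a * G a b = λ * γ b). -/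
/-!
The positive matrix `A = exp G` has a positive eigenvector: maximize `x ↦ r (A x)` over the
simplex, where `r w = min_a (A w)_a / w_a` is the Collatz–Wielandt function. At a maximizer, with
`v = A x` and `ρ = r v`, we have `ρ v ≤ A v`, and if `A v ≠ ρ v` then `A (A v - ρ v) > 0` gives
`r (A v) > ρ`, contradicting maximality since `r` is scale invariant. The eigenspace of a positive
eigenvector is a line: subtracting from `w` the largest multiple of `v` that keeps it nonnegative
leaves a nonnegative eigenvector with a zero entry, which positivity of `A` forces to vanish.

Since `G` commutes with `exp G`, it preserves that line, so `G v = λ v`; applied to `Gᵀ` this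
gives a positive left eigenvector `u`, with the same eigenvalue because `u ⬝ᵥ v > 0`. Along `v`
the semigroup acts by `exp (t λ)`, which stays bounded only if `λ ≤ 0`. Uniqueness: pairing with
`u` shows that every positive eigenvector of `G` has eigenvalue `λ`, so it is proportional to `v`
(likewise on the left), and the two normalizations fix the scalars.
-/

open Matrix BigOperators

open Finset

namespace Matrix

variable {S : Type*} [Fintype S]

theorem mulVec_pos_of_pos {A : Matrix S S ℝ} (hA : ∀ a b, 0 < A a b) {x : S → ℝ}
    (hx : 0 < x) (a : S) : 0 < (A *ᵥ x) a := by
  obtain ⟨hx, b, hb⟩ := Pi.lt_def.1 hx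
  exact sum_pos' (fun c _ => mul_nonneg (hA a c).le (hx c)) ⟨b, mem_univ b, mul_pos (hA a b) hb⟩

theorem exp_mulVec_of_mulVec_eq_smul [DecidableEq S] {B : Matrix S S ℝ} {μ : ℝ} {v : S → ℝ}
    (h : B *ᵥ v = μ • v) : NormedSpace.exp B *ᵥ v = Real.exp μ • v := by
  -- `NormedSpace.exp` does not depend on a norm; one is chosen only to sum the series.
  let _ := Matrix.linftyOpNormedRing (n := S) (α := ℝ)
  let _ := Matrix.linftyOpNormedAlgebra (n := S) (α := ℝ) (R := ℝ)
  have hpow (n : ℕ) : B ^ n *ᵥ v = μ ^ n • v := by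
    induction n with
    | zero => simp
    | succ n ih => rw [pow_succ', ← mulVec_mulVec, ih, mulVec_smul, h, smul_smul, pow_succ]
  have hB : HasSum (fun n : ℕ => ((n.factorial : ℝ)⁻¹ • B ^ n) *ᵥ v) (NormedSpace.exp B *ᵥ v) :=
    (NormedSpace.exp_series_hasSum_exp' (𝕂 := ℝ) B).map (mulVec.addMonoidHomLeft v)
      (continuous_id.matrix_mulVec continuous_const)
  have hμ : HasSum (fun n : ℕ => (μ ^ n / n.factorial) • v) (Real.exp μ • v) := by
    rw [Real.exp_eq_exp_ℝ]
    exact (NormedSpace.expSeries_div_hasSum_exp μ).smul_const v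
  refine hB.unique ?_
  simpa only [smul_mulVec, hpow, smul_smul, div_eq_inv_mul] using hμ

theorem eq_of_vecMul_eq_smul_of_mulVec_eq_smul {R : Type*} [CommRing R] [IsDomain R]
    {G : Matrix S S R} {μ ρ : R} {u v : S → R} (hu : u ᵥ* G = μ • u) (hv : G *ᵥ v = ρ • v)
    (huv : u ⬝ᵥ v ≠ 0) : μ = ρ := by
  have h := dotProduct_mulVec u G v
  rw [hu, hv, dotProduct_smul, smul_dotProduct, smul_eq_mul, smul_eq_mul] at h
  exact mul_right_cancel₀ huv h.symm

theorem nonpos_of_abs_exp_smul_le [DecidableEq S] {G : Matrix S S ℝ} {C ρ : ℝ} {v : S → ℝ}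
    (hv : v ≠ 0) (hGv : G *ᵥ v = ρ • v)
    (hbound : ∀ t : ℝ, 0 ≤ t → ∀ a b, |NormedSpace.exp (t • G) a b| ≤ C) : ρ ≤ 0 := by
  obtain ⟨a, ha⟩ : ∃ a, v a ≠ 0 := Function.ne_iff.1 hv
  have hlin (t : ℝ) (ht : 0 ≤ t) : t * ρ + 1 ≤ C * (∑ b, |v b|) / |v a| := by
    have heig : NormedSpace.exp (t • G) *ᵥ v = Real.exp (t * ρ) • v :=
      exp_mulVec_of_mulVec_eq_smul (by rw [smul_mulVec, hGv, smul_smul])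
    rw [le_div_iff₀ (abs_pos.2 ha)]
    calc (t * ρ + 1) * |v a| ≤ Real.exp (t * ρ) * |v a| := by
          gcongr; exact Real.add_one_le_exp _
      _ = |(NormedSpace.exp (t • G) *ᵥ v) a| := by
          rw [heig, Pi.smul_apply, smul_eq_mul, abs_mul, abs_of_pos (Real.exp_pos _)]
      _ ≤ ∑ b, |NormedSpace.exp (t • G) a b| * |v b| := by
          simp only [← abs_mul]
          exact abs_sum_le_sum_abs _ _
      _ ≤ C * ∑ b, |v b| := by
          rw [mul_sum]
          gcongr with b
          exact hbound t ht a b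
  by_contra! hρ
  have h0 := hlin 0 le_rfl
  have := hlin ((C * (∑ b, |v b|) / |v a|) / ρ) (div_nonneg (by linarith) hρ.le)
  rw [div_mul_cancel₀ _ hρ.ne'] at this
  linarith

section Positive

variable [Nonempty S]

noncomputable def collatzWielandt (A : Matrix S S ℝ) (w : S → ℝ) : ℝ :=
  univ.inf' univ_nonempty fun a => (A *ᵥ w) a / w a

variable {A : Matrix S S ℝ} {w : S → ℝ}

theorem collatzWielandt_mul_le (hw : ∀ a, 0 < w a) (a : S) :
    collatzWielandt A w * w a ≤ (A *ᵥ w) a :=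
  (le_div_iff₀ (hw a)).1 (inf'_le _ (mem_univ a))

theorem lt_collatzWielandt {r : ℝ} (hw : ∀ a, 0 < w a) (h : ∀ a, r * w a < (A *ᵥ w) a) :
    r < collatzWielandt A w :=
  (lt_inf'_iff _).2 fun a _ => (lt_div_iff₀ (hw a)).2 (h a)

theorem collatzWielandt_smul {c : ℝ} (hc : c ≠ 0) :
    collatzWielandt A (c • w) = collatzWielandt A w := by
  simp only [collatzWielandt, mulVec_smul, Pi.smul_apply, smul_eq_mul, mul_div_mul_left _ _ hc]

theorem continuousOn_collatzWielandt (A : Matrix S S ℝ) :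
    ContinuousOn (collatzWielandt A) {w | ∀ a, w a ≠ 0} :=
  ContinuousOn.finset_inf'_apply _ fun a _ =>
    ((continuous_apply a).comp (continuous_const.matrix_mulVec continuous_id)).continuousOn.div
      (continuous_apply a).continuousOn fun _ hw => hw a

theorem exists_pos_mulVec_eq_smul_of_pos (hA : ∀ a b, 0 < A a b) :
    ∃ (ρ : ℝ) (v : S → ℝ), (∀ a, 0 < v a) ∧ A *ᵥ v = ρ • v := by
  classical
  have hpos : ∀ x ∈ stdSimplex ℝ S, ∀ a, 0 < (A *ᵥ x) a := fun x hx =>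
    mulVec_pos_of_pos hA ((show 0 ≤ x from hx.1).lt_of_ne fun h => by simpa [← h] using hx.2)
  obtain ⟨x, hx, hmax⟩ := (isCompact_stdSimplex ℝ S).exists_isMaxOn
    ⟨_, single_mem_stdSimplex ℝ (Classical.arbitrary S)⟩
    ((continuousOn_collatzWielandt A).comp
      (continuous_const.matrix_mulVec continuous_id).continuousOn fun x hx a => (hpos x hx a).ne')
  set v := A *ᵥ x
  have hv : ∀ a, 0 < v a := hpos x hx
  refine ⟨collatzWielandt A v, v, hv, ?_⟩
  by_contra hne
  have hlt : collatzWielandt A v < collatzWielandt A (A *ᵥ v) := by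
    refine lt_collatzWielandt (mulVec_pos_of_pos hA (lt_of_strongLT hv)) fun a => ?_
    have hu : 0 ≤ A *ᵥ v - collatzWielandt A v • v := fun b =>
      sub_nonneg.2 (collatzWielandt_mul_le hv b)
    have := mulVec_pos_of_pos hA (hu.lt_of_ne (sub_ne_zero.2 hne).symm) a
    rwa [mulVec_sub, mulVec_smul, Pi.sub_apply, Pi.smul_apply, smul_eq_mul, sub_pos] at this
  have hs : 0 < ∑ a, v a := sum_pos (fun a _ => hv a) univ_nonempty
  have hmem : (∑ a, v a)⁻¹ • v ∈ stdSimplex ℝ S :=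
    ⟨fun a => by simpa using (mul_pos (inv_pos.2 hs) (hv a)).le, by simp [← mul_sum, hs.ne']⟩
  have hle : collatzWielandt A (A *ᵥ ((∑ a, v a)⁻¹ • v)) ≤ collatzWielandt A v := hmax hmem
  rw [mulVec_smul, collatzWielandt_smul (inv_ne_zero hs.ne')] at hle
  exact hle.not_gt hlt

theorem exists_eq_smul_of_mulVec_eq_smul (hA : ∀ a b, 0 < A a b) {ρ : ℝ} {v w : S → ℝ}
    (hv : ∀ a, 0 < v a) (hAv : A *ᵥ v = ρ • v) (hAw : A *ᵥ w = ρ • w) : ∃ c : ℝ, w = c • v := by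
  obtain ⟨a₀, ha₀⟩ := Finite.exists_min fun a => w a / v a
  refine ⟨w a₀ / v a₀, ?_⟩
  by_contra hne
  set u := w - (w a₀ / v a₀) • v
  have hu : 0 ≤ u := fun a => by
    simpa [u] using (le_div_iff₀ (hv a)).1 (ha₀ a)
  have hAu : A *ᵥ u = ρ • u := by
    rw [mulVec_sub, mulVec_smul, hAv, hAw, smul_sub, smul_comm]
  have := mulVec_pos_of_pos hA (hu.lt_of_ne (sub_ne_zero.2 hne).symm) a₀
  simp [hAu, u, div_mul_cancel₀ _ (hv a₀).ne'] at this

variable [DecidableEq S] {G : Matrix S S ℝ}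

theorem exists_pos_mulVec_eq_smul_of_exp_pos (hG : ∀ a b, 0 < NormedSpace.exp G a b) :
    ∃ (ρ : ℝ) (v : S → ℝ), (∀ a, 0 < v a) ∧ G *ᵥ v = ρ • v := by
  obtain ⟨r, v, hv, hAv⟩ := exists_pos_mulVec_eq_smul_of_pos hG
  have hAGv : NormedSpace.exp G *ᵥ (G *ᵥ v) = r • (G *ᵥ v) := by
    rw [mulVec_mulVec, ← (Commute.refl G).exp_right.eq, ← mulVec_mulVec, hAv, mulVec_smul]
  obtain ⟨ρ, hρ⟩ := exists_eq_smul_of_mulVec_eq_smul hG hv hAv hAGv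
  exact ⟨ρ, v, hv, hρ⟩

theorem exists_eq_smul_of_exp_pos (hG : ∀ a b, 0 < NormedSpace.exp G a b) {ρ : ℝ}
    {v w : S → ℝ} (hv : ∀ a, 0 < v a) (hGv : G *ᵥ v = ρ • v) (hGw : G *ᵥ w = ρ • w) :
    ∃ c : ℝ, w = c • v :=
  exists_eq_smul_of_mulVec_eq_smul hG hv (exp_mulVec_of_mulVec_eq_smul hGv)
    (exp_mulVec_of_mulVec_eq_smul hGw)

end Positive

end Matrix

section Normalization

variable {S : Type*} [Fintype S] {u v : S → ℝ}

theorem sum_smul_mul_smul (c d : ℝ) (u v : S → ℝ) :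
    ∑ a, (c • v) a * (d • u) a = c * d * ∑ a, v a * u a := by
  simp only [Pi.smul_apply, smul_eq_mul, mul_sum]
  exact sum_congr rfl fun a _ => by ring

variable [Nonempty S]

theorem exists_smul_normalization (hu : ∀ a, 0 < u a) (hv : ∀ a, 0 < v a) :
    ∃ c d : ℝ, 0 < c ∧ 0 < d ∧ ∑ a, (d • u) a = 1 ∧ ∑ a, (c • v) a * (d • u) a = 1 := by
  have hsu : 0 < ∑ a, u a := sum_pos (fun a _ => hu a) univ_nonempty
  have hsvu : 0 < ∑ a, v a * u a := sum_pos (fun a _ => mul_pos (hv a) (hu a)) univ_nonempty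
  refine ⟨(∑ a, u a) * (∑ a, v a * u a)⁻¹, (∑ a, u a)⁻¹, by positivity, by positivity, ?_, ?_⟩
  · simp only [Pi.smul_apply, smul_eq_mul, ← mul_sum, inv_mul_cancel₀ hsu.ne']
  · rw [sum_smul_mul_smul]
    field_simp

theorem smul_normalization_unique (hu : ∀ a, 0 < u a) (hv : ∀ a, 0 < v a) {c d c' d' : ℝ}
    (hd : ∑ a, (d • u) a = 1) (hcd : ∑ a, (c • v) a * (d • u) a = 1)
    (hd' : ∑ a, (d' • u) a = 1) (hcd' : ∑ a, (c' • v) a * (d' • u) a = 1) :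
    c' = c ∧ d' = d := by
  have hsu : 0 < ∑ a, u a := sum_pos (fun a _ => hu a) univ_nonempty
  have hsvu : 0 < ∑ a, v a * u a := sum_pos (fun a _ => mul_pos (hv a) (hu a)) univ_nonempty
  simp only [Pi.smul_apply, smul_eq_mul, ← mul_sum] at hd hd'
  obtain rfl : d' = d := mul_right_cancel₀ hsu.ne' (hd'.trans hd.symm)
  rw [sum_smul_mul_smul] at hcd hcd'
  exact ⟨mul_right_cancel₀ (left_ne_zero_of_mul_eq_one hd)
    (mul_right_cancel₀ hsvu.ne' (hcd'.trans hcd.symm)), rfl⟩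

end Normalization

theorem spine_perron_frobenius_general
    {S : Type*} [Fintype S] [Nonempty S] [DecidableEq S]
    (G : Matrix S S ℝ)
    (hpos : ∀ a b : S, 0 < NormedSpace.exp G a b)
    (C : ℝ)
    (hbound : ∀ t : ℝ, 0 ≤ t → ∀ a b : S, |NormedSpace.exp (t • G) a b| ≤ C) :
    ∃! p : ℝ × (S → ℝ) × (S → ℝ),
      p.1 ≤ 0 ∧
      (∀ a, 0 < p.2.1 a) ∧
      (∀ a, 0 < p.2.2 a) ∧
      (∑ a, p.2.2 a = 1) ∧
      (∑ a, p.2.1 a * p.2.2 a = 1) ∧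
      G *ᵥ p.2.1 = p.1 • p.2.1 ∧
      p.2.2 ᵥ* G = p.1 • p.2.2 := by
  have hposT : ∀ a b, 0 < NormedSpace.exp Gᵀ a b := fun a b => by
    simpa only [exp_transpose, transpose_apply] using hpos b a
  obtain ⟨ρ, v, hv, hGv⟩ := exists_pos_mulVec_eq_smul_of_exp_pos hpos
  obtain ⟨μ, u, hu, huG⟩ := exists_pos_mulVec_eq_smul_of_exp_pos hposT
  rw [mulVec_transpose] at huG
  have hu_dot (w : S → ℝ) (hw : ∀ a, 0 < w a) : u ⬝ᵥ w ≠ 0 :=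
    (sum_pos (fun a _ => mul_pos (hu a) (hw a)) univ_nonempty).ne'
  obtain rfl : μ = ρ := eq_of_vecMul_eq_smul_of_mulVec_eq_smul huG hGv (hu_dot v hv)
  obtain ⟨c, d, hc, hd, hsum, hpair⟩ := exists_smul_normalization hu hv
  refine ⟨(μ, c • v, d • u), ⟨nonpos_of_abs_exp_smul_le (lt_of_strongLT hv).ne' hGv hbound,
    fun a => mul_pos hc (hv a), fun a => mul_pos hd (hu a), hsum, hpair,
    by rw [mulVec_smul, hGv, smul_comm], by rw [smul_vecMul, huG, smul_comm]⟩, ?_⟩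
  rintro ⟨ρ', h', γ'⟩ ⟨-, hh', -, hsum', hpair', hGh', hγ'G⟩
  obtain rfl : μ = ρ' := eq_of_vecMul_eq_smul_of_mulVec_eq_smul huG hGh' (hu_dot h' hh')
  obtain ⟨c', rfl⟩ := exists_eq_smul_of_exp_pos hpos hv hGv hGh'
  obtain ⟨d', rfl⟩ := exists_eq_smul_of_exp_pos hposT hu (by rwa [mulVec_transpose])
    (by rwa [mulVec_transpose])
  obtain ⟨rfl, rfl⟩ := smul_normalization_unique hu hv hsum hpair hsum' hpair'
  rfl

/-- Perron–Frobenius for the generator of a bounded-size structured population process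
(Proposition 4.1 of the paper): a Metzler matrix `G` on a nonempty finite type `S` whose
exponential has strictly positive entries and whose semigroup `exp (t • G)` is uniformly
bounded admits a unique normalized Perron triple `(lam, h, gam)` with `lam ≤ 0`. -/
theorem spine_perron_frobenius
    {S : Type*} [Fintype S] [Nonempty S] [DecidableEq S]
    (G : Matrix S S ℝ)
    (hMetzler : ∀ a b : S, a ≠ b → 0 ≤ G a b)
    (hpos : ∀ a b : S, 0 < NormedSpace.exp G a b)
    (C : ℝ)
    (hbound : ∀ t : ℝ, 0 ≤ t → ∀ a b : S, |NormedSpace.exp (t • G) a b| ≤ C) :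
    ∃! p : ℝ × (S → ℝ) × (S → ℝ),
      p.1 ≤ 0 ∧
      (∀ a, 0 < p.2.1 a) ∧
      (∀ a, 0 < p.2.2 a) ∧
      (∑ a, p.2.2 a = 1) ∧
      (∑ a, p.2.1 a * p.2.2 a = 1) ∧
      G *ᵥ p.2.1 = p.1 • p.2.1 ∧
      p.2.2 ᵥ* G = p.1 • p.2.2 :=
  spine_perron_frobenius_general G hpos C hbound
end

section
/- Let S be a nonempty finite type and let Q be a real S×S matrix with nonnegative off-diagonal entries (Q a b ≥ 0 for a ≠ b) and zero row sums (∑_b Q a b = 0 for every a). Assume every entry of the matrix exponential exp(Q) is strictly positive. Then there is exactly one π : S → ℝ with π a ≥ 0 for all a, ∑_a π a = 1, and π ᵥ* Q = 0 (for all b, ∑_a π a * Q a b = 0); moreover this π satisfies π a > 0 for all a. -/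
/-!
The matrix `P = exp Q` is strictly positive with unit row sums, and it fixes every vector `v`
with `v ᵥ* Q = 0`. A fixed row vector of such a `P` cannot change sign: otherwise
`|v b| = |∑ a, v a * P a b| < ∑ a, |v a| * P a b` for every `b`, and summing over `b` gives
`∑ |v| < ∑ |v|`. Hence a stationary vector with zero sum vanishes, which is uniqueness, and one
with positive sum is strictly positive. Existence comes from `det Q = 0` (as `Q *ᵥ 1 = 0`): a
nonzero `v` with `v ᵥ* Q = 0` has nonzero sum and can be normalised.
-/

open Matrix BigOperators

theorem Finset.abs_sum_lt_sum_abs {ι α : Type*} [AddCommGroup α] [LinearOrder α]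
    [IsOrderedAddMonoid α] {s : Finset ι} {f : ι → α} {i j : ι} (hi : i ∈ s) (hj : j ∈ s)
    (hfi : 0 < f i) (hfj : f j < 0) : |∑ k ∈ s, f k| < ∑ k ∈ s, |f k| := by
  rw [abs_lt]
  constructor
  · rw [neg_lt, ← Finset.sum_neg_distrib]
    exact Finset.sum_lt_sum (fun k _ => neg_le_abs (f k))
      ⟨i, hi, (neg_neg_of_pos hfi).trans (abs_pos.mpr hfi.ne')⟩
  · exact Finset.sum_lt_sum (fun k _ => le_abs_self (f k)) ⟨j, hj, hfj.trans (abs_pos.mpr hfj.ne)⟩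

section Exponential

open NormedSpace
open scoped Nat

variable {𝔸 : Type*} [NormedRing 𝔸] [NormedAlgebra ℚ 𝔸] [CompleteSpace 𝔸] {a x : 𝔸}

theorem mul_exp_eq_self_of_mul_eq_zero (h : a * x = 0) : a * exp x = a := by
  have hterm : ∀ n ≠ 0, a * ((n !⁻¹ : ℚ) • x ^ n) = 0 := fun n hn => by
    obtain ⟨k, rfl⟩ := Nat.exists_eq_succ_of_ne_zero hn
    rw [mul_smul_comm, pow_succ', ← mul_assoc, h, zero_mul, smul_zero]
  rw [exp_eq_tsum_rat, ← (expSeries_summable' x).tsum_mul_left, tsum_eq_single 0 hterm]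
  simp

theorem exp_mul_eq_self_of_mul_eq_zero (h : x * a = 0) : exp x * a = a := by
  have hterm : ∀ n ≠ 0, ((n !⁻¹ : ℚ) • x ^ n) * a = 0 := fun n hn => by
    obtain ⟨k, rfl⟩ := Nat.exists_eq_succ_of_ne_zero hn
    rw [smul_mul_assoc, pow_succ, mul_assoc, h, mul_zero, smul_zero]
  rw [exp_eq_tsum_rat, ← (expSeries_summable' x).tsum_mul_right, tsum_eq_single 0 hterm]
  simp

end Exponential

namespace Matrix

open Finset

section Stochastic

variable {S : Type*} [Fintype S] {P : Matrix S S ℝ}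

theorem nonneg_or_nonpos_of_vecMul_eq_self (hP : ∀ a b, 0 < P a b)
    (hrow : ∀ a, ∑ b, P a b = 1) {v : S → ℝ} (hv : v ᵥ* P = v) :
    (∀ a, 0 ≤ v a) ∨ (∀ a, v a ≤ 0) := by
  by_contra! ⟨⟨j, hj⟩, ⟨i, hi⟩⟩
  have hlt : ∀ b, |v b| < ∑ a, |v a| * P a b := fun b =>
    calc |v b| = |∑ a, v a * P a b| := congrArg abs (congrFun hv b).symm
      _ < ∑ a, |v a * P a b| := abs_sum_lt_sum_abs (mem_univ i) (mem_univ j)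
          (mul_pos hi (hP i b)) (mul_neg_of_neg_of_pos hj (hP j b))
      _ = ∑ a, |v a| * P a b := by simp only [abs_mul, abs_of_pos (hP _ b)]
  have hcontra : ∑ b, |v b| < ∑ b, |v b| :=
    calc ∑ b, |v b| < ∑ b, ∑ a, |v a| * P a b :=
          sum_lt_sum_of_nonempty ⟨i, mem_univ i⟩ fun b _ => hlt b
      _ = ∑ a, |v a| := by rw [sum_comm]; simp only [← mul_sum, hrow, mul_one]
  exact lt_irrefl _ hcontra

theorem eq_zero_of_vecMul_eq_self_of_sum_eq_zero (hP : ∀ a b, 0 < P a b)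
    (hrow : ∀ a, ∑ b, P a b = 1) {v : S → ℝ} (hv : v ᵥ* P = v) (hsum : ∑ a, v a = 0) :
    v = 0 := by
  funext a
  rcases nonneg_or_nonpos_of_vecMul_eq_self hP hrow hv with h | h
  · exact (sum_eq_zero_iff_of_nonneg fun a _ => h a).mp hsum a (mem_univ a)
  · exact (sum_eq_zero_iff_of_nonpos fun a _ => h a).mp hsum a (mem_univ a)

theorem pos_of_vecMul_eq_self_of_sum_pos (hP : ∀ a b, 0 < P a b)
    (hrow : ∀ a, ∑ b, P a b = 1) {v : S → ℝ} (hv : v ᵥ* P = v) (hsum : 0 < ∑ a, v a)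
    (b : S) : 0 < v b := by
  have hnonneg : ∀ a, 0 ≤ v a := (nonneg_or_nonpos_of_vecMul_eq_self hP hrow hv).resolve_right
    fun h => hsum.not_ge (sum_nonpos fun a _ => h a)
  obtain ⟨i, -, hi⟩ := exists_lt_of_sum_lt (s := univ) (f := 0) (g := v) (by simpa using hsum)
  rw [← hv]
  exact sum_pos' (fun a _ => mul_nonneg (hnonneg a) (hP a b).le)
    ⟨i, mem_univ i, mul_pos hi (hP i b)⟩

end Stochastic

section Exponential

variable {S : Type*} [Fintype S] [DecidableEq S] {Q : Matrix S S ℝ}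

attribute [local instance] Matrix.linftyOpNormedRing Matrix.linftyOpNormedAlgebra

theorem vecMul_exp_eq_self_of_vecMul_eq_zero {v : S → ℝ} (h : v ᵥ* Q = 0) :
    v ᵥ* NormedSpace.exp Q = v := by
  have H : replicateRow S (v ᵥ* NormedSpace.exp Q) = replicateRow S v := by
    rw [replicateRow_vecMul]
    exact mul_exp_eq_self_of_mul_eq_zero (by rw [← replicateRow_vecMul, h, replicateRow_zero])
  ext b
  exact congr_fun₂ H b b

theorem exp_mulVec_eq_self_of_mulVec_eq_zero {v : S → ℝ} (h : Q *ᵥ v = 0) :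
    NormedSpace.exp Q *ᵥ v = v := by
  have H : replicateCol S (NormedSpace.exp Q *ᵥ v) = replicateCol S v := by
    rw [replicateCol_mulVec]
    exact exp_mul_eq_self_of_mul_eq_zero (by rw [← replicateCol_mulVec, h, replicateCol_zero])
  ext a
  exact congr_fun₂ H a a

theorem sum_exp_apply_eq_one_of_sum_eq_zero (hrow : ∀ a, ∑ b, Q a b = 0) (a : S) :
    ∑ b, NormedSpace.exp Q a b = 1 := by
  have h1 : Q *ᵥ 1 = 0 := by ext a; simpa [mulVec, dotProduct] using hrow a
  simpa [mulVec, dotProduct] using congrFun (exp_mulVec_eq_self_of_mulVec_eq_zero h1) a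

end Exponential

end Matrix

theorem stationary_law_unique_general
    {S : Type*} [Fintype S] [Nonempty S] [DecidableEq S]
    (Q : Matrix S S ℝ)
    (hrow : ∀ a : S, ∑ b, Q a b = 0)
    (hirr : ∀ a b : S, 0 < NormedSpace.exp Q a b) :
    ∃ π : S → ℝ,
      (∀ a, 0 < π a) ∧ (∑ a, π a = 1) ∧ π ᵥ* Q = 0 ∧
      ∀ π' : S → ℝ, (∀ a, 0 ≤ π' a) → (∑ a, π' a = 1) → π' ᵥ* Q = 0 → π' = π := by
  have hProw := sum_exp_apply_eq_one_of_sum_eq_zero hrow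
  have hfix : ∀ {v : S → ℝ}, v ᵥ* Q = 0 → v ᵥ* NormedSpace.exp Q = v :=
    vecMul_exp_eq_self_of_vecMul_eq_zero
  obtain ⟨v, hv0, hvQ⟩ : ∃ v ≠ 0, v ᵥ* Q = 0 := exists_vecMul_eq_zero_iff.mpr <|
    exists_mulVec_eq_zero_iff.mp ⟨1, one_ne_zero, by ext a; simpa [mulVec, dotProduct] using hrow a⟩
  have hvsum : ∑ a, v a ≠ 0 := fun h =>
    hv0 (eq_zero_of_vecMul_eq_self_of_sum_eq_zero hirr hProw (hfix hvQ) h)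
  set π := (∑ a, v a)⁻¹ • v
  have hπQ : π ᵥ* Q = 0 := by rw [smul_vecMul, hvQ, smul_zero]
  have hπsum : ∑ a, π a = 1 := by simp [π, ← Finset.mul_sum, inv_mul_cancel₀ hvsum]
  refine ⟨π, pos_of_vecMul_eq_self_of_sum_pos hirr hProw (hfix hπQ) (hπsum ▸ one_pos), hπsum,
    hπQ, fun π' _ hπ'sum hπ'Q => ?_⟩
  have hdQ : (π' - π) ᵥ* Q = 0 := by rw [sub_vecMul, hπ'Q, hπQ, sub_zero]
  refine sub_eq_zero.mp (eq_zero_of_vecMul_eq_self_of_sum_eq_zero hirr hProw (hfix hdQ) ?_)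
  simp [Finset.sum_sub_distrib, hπsum, hπ'sum]

/-- Uniqueness (and positivity) of the stationary probability vector of an irreducible
conservative Q-matrix: if `Q` has nonnegative off-diagonal entries, zero row sums, and
`exp Q` has strictly positive entries, then there is exactly one stationary probability
vector `π`, and it is strictly positive (Section 4.1 of the paper). -/
theorem stationary_law_unique
    {S : Type*} [Fintype S] [Nonempty S] [DecidableEq S]
    (Q : Matrix S S ℝ)
    (hMetzler : ∀ a b : S, a ≠ b → 0 ≤ Q a b)
    (hrow : ∀ a : S, ∑ b, Q a b = 0)
    (hirr : ∀ a b : S, 0 < NormedSpace.exp Q a b) :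
    ∃ π : S → ℝ,
      (∀ a, 0 < π a) ∧ (∑ a, π a = 1) ∧ π ᵥ* Q = 0 ∧
      ∀ π' : S → ℝ, (∀ a, 0 ≤ π' a) → (∑ a, π' a = 1) → π' ᵥ* Q = 0 → π' = π :=
  stationary_law_unique_general Q hrow hirr
end

section
/- Let b > 0 and c > 0, set θ = b/c, and define π z = (1/(exp(θ) − 1)) * θ^z / z! for z ≥ 1. Then 2*b * ∑'_{z ≥ 1} π z * z/(z+1) = 2*b*(1 − c/b + 1/(exp(b/c) − 1)). -/
open BigOperators

/-- Explicit evaluation of the division rate along the sampled lineage in the logistic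
growth–fragmentation example of Section 3.1 of the paper:
`2b ∑_{z≥1} π_z z/(z+1) = 2b (1 - c/b + 1/(e^{b/c}-1))`, where
`π_z = (b/c)^z/(z!(e^{b/c}-1))`.  (The `z = 0` term of the sum vanishes since its
factor `z/(z+1)` is `0`.) -/
theorem sampled_division_rate_explicit
    (b c : ℝ) (hb : 0 < b) (hc : 0 < c)
    (π : ℕ → ℝ)
    (hπ : ∀ z : ℕ, 1 ≤ z →
      π z = (1 / (Real.exp (b / c) - 1)) * (b / c) ^ z / (Nat.factorial z : ℝ)) :
    2 * b * ∑' z : ℕ, π z * ((z : ℝ) / ((z : ℝ) + 1)) =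
      2 * b * (1 - c / b + 1 / (Real.exp (b / c) - 1)) := by
  set θ : ℝ := b / c with hθdef
  have hθ : 0 < θ := div_pos hb hc
  set E : ℝ := Real.exp θ - 1 with hEdef
  have hE : 0 < E := by
    have := Real.add_one_le_exp θ
    simp only [hEdef]; linarith
  -- summabilities
  have hs1 : Summable (fun z : ℕ => θ ^ z / (Nat.factorial z : ℝ)) :=
    Real.summable_pow_div_factorial θ
  have hs2 : Summable (fun z : ℕ => θ ^ z / (Nat.factorial (z + 1) : ℝ)) := by
    refine Summable.of_nonneg_of_le (fun z => by positivity) (fun z => ?_) hs1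
    gcongr
    exact Nat.le_succ z
  have S1 : ∑' z : ℕ, θ ^ z / (Nat.factorial z : ℝ) = Real.exp θ := by
    rw [Real.exp_eq_exp_ℝ, NormedSpace.exp_eq_tsum_div]
  have S2 : ∑' z : ℕ, θ ^ z / (Nat.factorial (z + 1) : ℝ) = E / θ := by
    have hmul : θ * ∑' z : ℕ, θ ^ z / (Nat.factorial (z + 1) : ℝ)
        = ∑' z : ℕ, θ ^ (z + 1) / (Nat.factorial (z + 1) : ℝ) := by
      rw [← tsum_mul_left]
      congr 1; funext z; rw [pow_succ]; ring
    have hshift : Real.exp θ = 1 + ∑' z : ℕ, θ ^ (z + 1) / (Nat.factorial (z + 1) : ℝ) := by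
      rw [← S1, Summable.tsum_eq_zero_add hs1]
      simp
    have : θ * ∑' z : ℕ, θ ^ z / (Nat.factorial (z + 1) : ℝ) = E := by
      rw [hmul, hEdef]; linarith [hshift]
    field_simp [hθ.ne'] at this ⊢
    linarith
  have key : ∀ z : ℕ, π z * ((z : ℝ) / ((z : ℝ) + 1))
      = (1 / E) * (θ ^ z / (Nat.factorial z : ℝ) - θ ^ z / (Nat.factorial (z + 1) : ℝ)) := by
    intro z
    rcases Nat.eq_zero_or_pos z with rfl | hz
    · simp
    · rw [hπ z hz]
      have hf : (Nat.factorial (z + 1) : ℝ) = ((z : ℝ) + 1) * (Nat.factorial z : ℝ) := by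
        rw [Nat.factorial_succ]; push_cast; ring
      have h1 : (Nat.factorial z : ℝ) ≠ 0 := Nat.cast_ne_zero.2 (Nat.factorial_ne_zero z)
      have h2 : ((z : ℝ) + 1) ≠ 0 := by positivity
      rw [hf]
      field_simp
      ring
  rw [tsum_congr key, tsum_mul_left, Summable.tsum_sub hs1 hs2, S1, S2]
  have hb' : b ≠ 0 := hb.ne'
  have hc' : c ≠ 0 := hc.ne'
  have hEexp : Real.exp θ = E + 1 := by rw [hEdef]; ring
  rw [hEexp, hθdef]
  field_simp
  ring
end

section
/- Let (Ω, 𝓕, P) be a probability space carrying: (i) independent, identically distributed random variables (X_n)_{n∈ℕ} with X_n ≥ 0 almost surely and E[log(1 + X_0)] < ∞; and (ii) independent, identically distributed random variables (T_n)_{n∈ℕ}, each with the exponential distribution of rate μ > 0 (law with density μ e^{−μ t} on [0,∞)), such that the whole family (X_n)_n ∪ (T_n)_n is independent. Set S_n = ∑_{j<n} T_j. Then for every c > 0, almost surely the series ∑_{n} X_n * exp(−c * S_n) converges (has finite sum). -/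
open MeasureTheory ProbabilityTheory Filter Topology Finset

/-!
By the strong law of large numbers, `log (1 + X_n) / n → 0` almost surely, while
`S_n ≥ ∑_{j<n} min (T_j) 1` grows at least like `n · E[min (T_0) 1] / 2` with
`E[min (T_0) 1] > 0`. Hence eventually `X_n e^{-c S_n} ≤ e^{log (1 + X_n) - c S_n} ≤ e^{-δ n}`
for some `δ > 0`, and the series is dominated by a geometric one.
-/

lemma tendsto_div_natCast_zero_of_tendsto_avg {y : ℕ → ℝ} {L : ℝ}
    (h : Tendsto (fun n : ℕ => (∑ i ∈ range n, y i) / n) atTop (𝓝 L)) :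
    Tendsto (fun n : ℕ => y n / n) atTop (𝓝 0) := by
  have hshift : Tendsto (fun n : ℕ => (∑ i ∈ range (n + 1), y i) / ((n : ℝ) + 1))
      atTop (𝓝 L) := by
    simpa [Function.comp_def] using h.comp (tendsto_add_atTop_nat 1)
  have hratio : Tendsto (fun n : ℕ => ((n : ℝ) + 1) / n) atTop (𝓝 1) := by
    simpa using (tendsto_natCast_div_add_atTop (1 : ℝ)).inv₀ one_ne_zero
  have hdiff := (hshift.mul hratio).sub h
  rw [mul_one, sub_self] at hdiff
  refine hdiff.congr' ?_
  filter_upwards [eventually_ne_atTop 0] with n hn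
  rw [sum_range_succ]
  field_simp
  ring

lemma eventually_mul_le_sum_of_tendsto_avg {z : ℕ → ℝ} {m δ : ℝ}
    (h : Tendsto (fun n : ℕ => (∑ i ∈ range n, z i) / n) atTop (𝓝 m)) (hδ : δ < m) :
    ∀ᶠ n : ℕ in atTop, δ * n ≤ ∑ i ∈ range n, z i := by
  filter_upwards [h.eventually (lt_mem_nhds hδ), eventually_gt_atTop 0] with n hlt hn
  exact (le_div_iff₀ (by positivity)).1 hlt.le

lemma summable_mul_exp_neg_of_tendsto_log_div {x s : ℕ → ℝ} {δ : ℝ} (hδ : 0 < δ)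
    (hx : ∀ n, 0 ≤ x n) (hlog : Tendsto (fun n : ℕ => Real.log (1 + x n) / n) atTop (𝓝 0))
    (hs : ∀ᶠ n : ℕ in atTop, δ * n ≤ s n) :
    Summable (fun n => x n * Real.exp (-s n)) := by
  have hgeom : Summable (fun n : ℕ => Real.exp (n * (-(δ / 2)))) :=
    Real.summable_exp_nat_mul_iff.2 (by linarith)
  refine hgeom.of_norm_bounded_eventually_nat ?_
  filter_upwards [hlog.eventually (gt_mem_nhds (half_pos hδ)), hs, eventually_gt_atTop 0]
    with n hlogn hsn hn
  have hlog_le : Real.log (1 + x n) ≤ δ / 2 * n :=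
    ((div_lt_iff₀ (by positivity)).1 hlogn).le
  have hx_le : x n ≤ Real.exp (Real.log (1 + x n)) := by
    rw [Real.exp_log (by linarith [hx n])]
    linarith
  rw [Real.norm_of_nonneg (mul_nonneg (hx n) (Real.exp_nonneg _))]
  calc x n * Real.exp (-s n)
      ≤ Real.exp (Real.log (1 + x n)) * Real.exp (-s n) := by gcongr
    _ = Real.exp (Real.log (1 + x n) - s n) := by rw [← Real.exp_add, sub_eq_add_neg]
    _ ≤ Real.exp (n * (-(δ / 2))) := by gcongr; linarith

section Probability

variable {Ω : Type*} [MeasurableSpace Ω] {P : Measure Ω}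

lemma ProbabilityTheory.iIndepFun.pairwise_indepFun_comp {ι κ β γ : Type*} [MeasurableSpace β]
    [MeasurableSpace γ] {f : ι → Ω → β} (h : iIndepFun f P) {e : κ → ι}
    (he : Function.Injective e) {φ : β → γ} (hφ : Measurable φ) :
    Pairwise (Function.onFun (IndepFun · · P) fun k => φ ∘ f (e k)) :=
  fun _ _ hij => (h.indepFun (he.ne hij)).comp hφ hφ

lemma ae_tendsto_div_natCast_zero {Y : ℕ → Ω → ℝ} (hint : Integrable (Y 0) P)
    (hindep : Pairwise (Function.onFun (IndepFun · · P) Y)) (hident : ∀ i, IdentDistrib (Y i) (Y 0) P P) :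
    ∀ᵐ ω ∂P, Tendsto (fun n : ℕ => Y n ω / n) atTop (𝓝 0) :=
  (strong_law_ae_real Y hint hindep hident).mono
    fun _ h => tendsto_div_natCast_zero_of_tendsto_avg h

lemma integral_pos_of_ae_pos [NeZero P] {f : Ω → ℝ} (hf : Integrable f P)
    (hpos : ∀ᵐ ω ∂P, 0 < f ω) : 0 < ∫ ω, f ω ∂P := by
  rw [integral_pos_iff_support_of_nonneg_ae (hpos.mono fun _ h => h.le) hf]
  have hcompl : P (Function.support f)ᶜ = 0 :=
    ae_iff.1 (hpos.mono fun _ h => (Function.mem_support.2 h.ne'))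
  calc 0 < P Set.univ := Measure.measure_univ_pos.2 (NeZero.ne P)
    _ ≤ P (Function.support f) + P (Function.support f)ᶜ := measure_univ_le_add_compl _
    _ = P (Function.support f) := by rw [hcompl, add_zero]

end Probability

lemma ae_pos_expMeasure {r : ℝ} (hr : 0 < r) : ∀ᵐ x ∂expMeasure r, 0 < x := by
  have := isProbabilityMeasure_expMeasure hr
  have hIic : expMeasure r (Set.Iic 0) = 0 := by
    rw [← ofReal_cdf, cdf_expMeasure_eq hr]
    simp
  simpa [ae_iff, not_lt, Set.Iic] using hIic

theorem summable_discounted_series_of_iid_general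
    {Ω : Type*} [MeasurableSpace Ω] (P : Measure Ω) [IsProbabilityMeasure P]
    (X T : ℕ → Ω → ℝ) (μ c : ℝ) (hμ : 0 < μ) (hc : 0 < c)
    (hmeasT : ∀ n, Measurable (T n))
    (hindep : iIndepFun (Sum.elim X T) P)
    (hidentX : ∀ n, IdentDistrib (X n) (X 0) P P)
    (hnn : ∀ n, ∀ᵐ ω ∂P, 0 ≤ X n ω)
    (hint : Integrable (fun ω => Real.log (1 + X 0 ω)) P)
    (hT : ∀ n, P.map (T n) = expMeasure μ) :
    ∀ᵐ ω ∂P,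
      Summable (fun n : ℕ =>
        X n ω * Real.exp (-c * ∑ j ∈ Finset.range n, T j ω)) := by
  have hlog : Measurable fun x : ℝ => Real.log (1 + x) := by fun_prop
  have hmin : Measurable fun t : ℝ => min t 1 := by fun_prop
  have hTpos : ∀ n, ∀ᵐ ω ∂P, 0 < T n ω := fun n =>
    ae_of_ae_map (hmeasT n).aemeasurable (hT n ▸ ae_pos_expMeasure hμ)
  have hlogX : ∀ᵐ ω ∂P, Tendsto (fun n : ℕ => Real.log (1 + X n ω) / n) atTop (𝓝 0) :=
    ae_tendsto_div_natCast_zero hint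
      (hindep.pairwise_indepFun_comp Sum.inl_injective hlog) fun n => (hidentX n).comp hlog
  -- Truncation makes the summands bounded, so the strong law needs no moment of `T`.
  set Z : ℕ → Ω → ℝ := fun n ω => min (T n ω) 1
  have hZint : Integrable (Z 0) P := by
    refine .of_bound ((hmeasT 0).min measurable_const).aestronglyMeasurable 1 ?_
    filter_upwards [hTpos 0] with ω hω
    rw [Real.norm_of_nonneg (le_min hω.le zero_le_one)]
    exact min_le_right _ _
  have hZmean : 0 < P[Z 0] :=
    integral_pos_of_ae_pos hZint ((hTpos 0).mono fun _ h => lt_min h one_pos)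
  have hZident : ∀ n, IdentDistrib (Z n) (Z 0) P P := fun n =>
    IdentDistrib.comp ⟨(hmeasT n).aemeasurable, (hmeasT 0).aemeasurable, (hT n).trans (hT 0).symm⟩
      hmin
  have hZlln := strong_law_ae_real Z hZint
    (hindep.pairwise_indepFun_comp Sum.inr_injective hmin) hZident
  filter_upwards [hlogX, hZlln, ae_all_iff.2 hnn] with ω hlogω hZω hXω
  simp only [neg_mul]
  refine summable_mul_exp_neg_of_tendsto_log_div (δ := c * (P[Z 0] / 2)) (by positivity) hXω
    hlogω ?_
  filter_upwards [eventually_mul_le_sum_of_tendsto_avg hZω (half_lt_self hZmean)] with n hn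
  calc c * (P[Z 0] / 2) * n = c * (P[Z 0] / 2 * n) := by ring
    _ ≤ c * ∑ i ∈ range n, Z i ω := by gcongr
    _ ≤ c * ∑ j ∈ range n, T j ω := by gcongr with j; exact min_le_left _ _

/-- Almost sure finiteness of the exponentially discounted compound Poisson series
`∑_n X_n e^{-c S_n}` of Proposition 3.4 of the paper: the `X_n` are i.i.d. nonnegative
with finite log-moment, the `T_n` are i.i.d. exponential of rate `μ > 0`, the whole
family is independent, `S_n = ∑_{j<n} T_j`, and `c > 0`. -/
theorem summable_discounted_series_of_iid
    {Ω : Type*} [MeasurableSpace Ω] (P : Measure Ω) [IsProbabilityMeasure P]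
    (X T : ℕ → Ω → ℝ) (μ c : ℝ) (hμ : 0 < μ) (hc : 0 < c)
    (hmeasX : ∀ n, Measurable (X n)) (hmeasT : ∀ n, Measurable (T n))
    (hindep : iIndepFun (Sum.elim X T) P)
    (hidentX : ∀ n, IdentDistrib (X n) (X 0) P P)
    (hnn : ∀ n, ∀ᵐ ω ∂P, 0 ≤ X n ω)
    (hint : Integrable (fun ω => Real.log (1 + X 0 ω)) P)
    (hT : ∀ n, P.map (T n) = expMeasure μ) :
    ∀ᵐ ω ∂P,
      Summable (fun n : ℕ =>
        X n ω * Real.exp (-c * ∑ j ∈ Finset.range n, T j ω)) :=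
  summable_discounted_series_of_iid_general P X T μ c hμ hc hmeasT hindep hidentX hnn hint hT
end

section
/- Let d ≥ 1, let K ⊂ ℝ^d be compact, and let ψ : ℝ^d → ℝ be continuously differentiable on an open set containing K. Let I be a countable type, ι : I → ℝ^d a family of increment vectors, and w : ℝ^d → I → ℝ a family of nonnegative weights such that: (i) there is C < ∞ with ∑'_i (‖ι i‖₁ + 1)² * w z i ≤ C for every z ∈ K; and (ii) there is L < ∞ such that for every integer N ≥ 1, every z ∈ K and every i ∈ I, |ψ(z + (1/N) • ι i) − ψ(z)| ≤ L * ‖ι i‖₁ / N. Then sup_{z ∈ K} | N * ∑'_i w z i * (ψ(z + (1/N) • ι i) − ψ(z)) − ∑'_i w z i * (fderiv ψ z)(ι i) | tends to 0 as N → ∞. -/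
/-!
Write `Δ_N(z, v) = N (ψ(z + v/N) - ψ z)` and `‖v‖₁ = ∑ j, |v j|`. As `ψ` is `C¹` near the
compact set `K`, it is uniformly differentiable there, so for increments with `‖v‖₁ ≤ r N` the
mean value inequality gives `|Δ_N(z, v) - Dψ(z) v| ≤ ε ‖v‖₁`. For the large increments
`‖v‖₁ > r N`, the Lipschitz hypothesis and a bound `M` for `Dψ` on `K` give
`|Δ_N(z, v) - Dψ(z) v| ≤ (L + M) ‖v‖₁ ≤ (L + M) ‖v‖₁² / (r N)`. Both errors are dominated by
`(ε + (L + M) / (r N)) (‖v‖₁ + 1)²`, which the weights sum to at most `(ε + (L + M) / (r N)) C`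
uniformly in `z ∈ K`, and this is at most `2 ε C` once `N ≥ (L + M) / (r ε)`.
-/

open Filter Metric Topology

theorem pi_norm_le_sum_norm {ι : Type*} [Fintype ι] {E : ι → Type*}
    [∀ i, SeminormedAddCommGroup (E i)] (x : ∀ i, E i) : ‖x‖ ≤ ∑ i, ‖x i‖ :=
  (pi_norm_le_iff_of_nonneg (Finset.sum_nonneg fun _ _ => norm_nonneg _)).2 fun i =>
    Finset.single_le_sum (f := fun i => ‖x i‖) (fun _ _ => norm_nonneg _) (Finset.mem_univ i)

theorem tendsto_iSup_of_eventually_le_mul {α β : Type*} {l : Filter β} {F : β → α → ℝ}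
    (hF : ∀ n a, 0 ≤ F n a) (C : ℝ) (h : ∀ ε > 0, ∀ᶠ n in l, ∀ a, F n a ≤ ε * C) :
    Tendsto (fun n => ⨆ a, F n a) l (𝓝 0) := by
  refine tendsto_order.2 ⟨fun b hb => Eventually.of_forall fun n =>
    hb.trans_le (Real.iSup_nonneg (hF n)), fun b hb => ?_⟩
  have hε : 0 < b / (|C| + 1) := by positivity
  filter_upwards [h _ hε] with n hn
  calc ⨆ a, F n a ≤ b / (|C| + 1) * |C| :=
        Real.iSup_le (fun a => (hn a).trans (mul_le_mul_of_nonneg_left (le_abs_self C) hε.le))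
          (by positivity)
    _ < b := by
        rw [div_mul_eq_mul_div, div_lt_iff₀ (by positivity)]
        nlinarith

theorem le_add_one_sq {a : ℝ} (ha : 0 ≤ a) : a ≤ (a + 1) ^ 2 := by
  nlinarith

section Series

variable {I : Type*}

theorem summable_mul_of_abs_le {w x u : I → ℝ} {A : ℝ} (hw : ∀ i, 0 ≤ w i)
    (hu : Summable fun i => u i * w i) (hx : ∀ i, |x i| ≤ A * u i) :
    Summable fun i => w i * x i :=
  (hu.mul_left A).of_norm_bounded fun i => by
    rw [Real.norm_eq_abs, abs_mul, abs_of_nonneg (hw i), ← mul_assoc, mul_comm (A * u i)]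
    exact mul_le_mul_of_nonneg_left (hx i) (hw i)

theorem abs_tsum_mul_le {w x u : I → ℝ} {B : ℝ} (hw : ∀ i, 0 ≤ w i)
    (hu : Summable fun i => u i * w i) (hx : ∀ i, |x i| ≤ B * u i) :
    |∑' i, w i * x i| ≤ B * ∑' i, u i * w i := by
  refine tsum_of_norm_bounded (f := fun i => w i * x i) (hu.hasSum.mul_left B) fun i => ?_
  rw [Real.norm_eq_abs, abs_mul, abs_of_nonneg (hw i), ← mul_assoc, mul_comm (B * u i)]
  exact mul_le_mul_of_nonneg_left (hx i) (hw i)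

theorem abs_mul_tsum_sub_tsum_le {w x y u : I → ℝ} {A A' B c : ℝ} (hw : ∀ i, 0 ≤ w i)
    (hu : Summable fun i => u i * w i) (hx : ∀ i, |x i| ≤ A * u i) (hy : ∀ i, |y i| ≤ A' * u i)
    (hxy : ∀ i, |c * x i - y i| ≤ B * u i) :
    |c * ∑' i, w i * x i - ∑' i, w i * y i| ≤ B * ∑' i, u i * w i := by
  rw [← tsum_mul_left, ← ((summable_mul_of_abs_le hw hu hx).mul_left c).tsum_sub
    (summable_mul_of_abs_le hw hu hy)]
  simp_rw [fun i => show c * (w i * x i) - w i * y i = w i * (c * x i - y i) by ring]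
  exact abs_tsum_mul_le hw hu hxy

end Series

section UniformDifferentiability

variable {E F : Type*} [NormedAddCommGroup E] [NormedSpace ℝ E] [NormedAddCommGroup F]
  [NormedSpace ℝ F]

theorem IsCompact.exists_forall_norm_sub_sub_fderiv_le {K U : Set E} {ψ : E → F}
    (hK : IsCompact K) (hU : IsOpen U) (hKU : K ⊆ U) (hψ : ContDiffOn ℝ 1 ψ U) {ε : ℝ}
    (hε : 0 < ε) :
    ∃ r > 0, ∀ z ∈ K, ∀ v, ‖v‖ ≤ r → ‖ψ (z + v) - ψ z - fderiv ℝ ψ z v‖ ≤ ε * ‖v‖ := by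
  have hcont : ContinuousOn (fderiv ℝ ψ) U := hψ.continuousOn_fderiv_of_isOpen hU le_rfl
  obtain ⟨δ, hδ, hδU⟩ := hK.exists_thickening_subset_open hU hKU
  obtain ⟨η, hη, hclose⟩ := mem_uniformity_dist.1 <|
    hK.uniformContinuousAt_of_continuousAt (fderiv ℝ ψ)
      (fun z hz => hcont.continuousAt (hU.mem_nhds (hKU hz))) (dist_mem_uniformity hε)
  refine ⟨min δ η / 2, by positivity, fun z hz v hv => ?_⟩
  have hsU : ball z (min δ η) ⊆ U :=
    (ball_subset_ball (min_le_left _ _)).trans ((ball_subset_thickening hz δ).trans hδU)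
  have hderiv : ∀ x ∈ ball z (min δ η),
      HasFDerivWithinAt ψ (fderiv ℝ ψ x) (ball z (min δ η)) x := fun x hx =>
    ((hψ.differentiableOn one_ne_zero).differentiableAt
      (hU.mem_nhds (hsU hx))).hasFDerivAt.hasFDerivWithinAt
  have hnear : ∀ x ∈ ball z (min δ η), ‖fderiv ℝ ψ x - fderiv ℝ ψ z‖ ≤ ε := fun x hx => by
    rw [← dist_eq_norm, dist_comm]
    exact (hclose (mem_ball'.1 (ball_subset_ball (min_le_right _ _) hx)) hz).le
  have hv' : z + v ∈ ball z (min δ η) := by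
    rw [mem_ball, dist_eq_norm, add_sub_cancel_left]
    have : 0 < min δ η := lt_min hδ hη
    linarith
  simpa only [add_sub_cancel_left] using
    (convex_ball z (min δ η)).norm_image_sub_le_of_norm_hasFDerivWithin_le' hderiv hnear
      (mem_ball_self (lt_min hδ hη)) hv'

theorem norm_smul_sub_sub_apply_le {ψ : E → F} {D : E →L[ℝ] F} {z v : E} {N r ε L M a : ℝ}
    (hN : 0 < N) (hr : 0 < r) (hε : 0 ≤ ε) (hL : 0 ≤ L) (hD : ‖D‖ ≤ M) (hva : ‖v‖ ≤ a)
    (hsmall : ∀ u, ‖u‖ ≤ r → ‖ψ (z + u) - ψ z - D u‖ ≤ ε * ‖u‖)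
    (hlip : ‖ψ (z + N⁻¹ • v) - ψ z‖ ≤ L * a / N) :
    ‖N • (ψ (z + N⁻¹ • v) - ψ z) - D v‖ ≤ (ε + (L + M) / (N * r)) * (a + 1) ^ 2 := by
  have ha : 0 ≤ a := (norm_nonneg v).trans hva
  have hM : 0 ≤ M := (norm_nonneg D).trans hD
  set q := (L + M) / (N * r) with hq_def
  have hq : 0 ≤ q := by positivity
  by_cases hvr : a ≤ N * r
  · have hu : ‖N⁻¹ • v‖ ≤ r := by
      rw [norm_smul, Real.norm_of_nonneg (inv_nonneg.2 hN.le), inv_mul_le_iff₀ hN]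
      linarith
    calc ‖N • (ψ (z + N⁻¹ • v) - ψ z) - D v‖
        = N * ‖ψ (z + N⁻¹ • v) - ψ z - D (N⁻¹ • v)‖ := by
          rw [D.map_smul, ← norm_smul_of_nonneg hN.le, smul_sub N _ (N⁻¹ • D v),
            smul_inv_smul₀ hN.ne']
      _ ≤ N * (ε * ‖N⁻¹ • v‖) := by gcongr; exact hsmall _ hu
      _ = ε * ‖v‖ := by
          rw [norm_smul, Real.norm_of_nonneg (inv_nonneg.2 hN.le)]
          field_simp
      _ ≤ ε * a := by gcongr
      _ ≤ (ε + q) * (a + 1) ^ 2 := by nlinarith [le_add_one_sq ha, sq_nonneg (a + 1)]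
  · replace hvr : N * r < a := not_le.1 hvr
    have hΔ : ‖N • (ψ (z + N⁻¹ • v) - ψ z)‖ ≤ L * a := by
      rw [norm_smul_of_nonneg hN.le, ← le_div_iff₀' hN]
      exact hlip
    have hDv : ‖D v‖ ≤ M * a := (D.le_opNorm v).trans (mul_le_mul hD hva (norm_nonneg _) hM)
    calc ‖N • (ψ (z + N⁻¹ • v) - ψ z) - D v‖
        ≤ L * a + M * a := (norm_sub_le _ _).trans (add_le_add hΔ hDv)
      _ = q * (N * r) * a := by rw [hq_def]; field_simp
      _ ≤ q * a * a := by gcongr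
      _ ≤ (ε + q) * (a + 1) ^ 2 := by nlinarith [sq_nonneg (a + 1)]

end UniformDifferentiability

theorem abs_mul_tsum_sub_tsum_apply_le {I E : Type*} [NormedAddCommGroup E] [NormedSpace ℝ E]
    {ψ : E → ℝ} {D : E →L[ℝ] ℝ} {z : E} {ι : I → E} {a w : I → ℝ} {N r ε L M : ℝ}
    (hN : 0 < N) (hr : 0 < r) (hε : 0 ≤ ε) (hL : 0 ≤ L) (hD : ‖D‖ ≤ M)
    (ha : ∀ i, ‖ι i‖ ≤ a i) (hw : ∀ i, 0 ≤ w i) (hu : Summable fun i => (a i + 1) ^ 2 * w i)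
    (hsmall : ∀ u, ‖u‖ ≤ r → ‖ψ (z + u) - ψ z - D u‖ ≤ ε * ‖u‖)
    (hlip : ∀ i, |ψ (z + N⁻¹ • ι i) - ψ z| ≤ L * a i / N) :
    |N * ∑' i, w i * (ψ (z + N⁻¹ • ι i) - ψ z) - ∑' i, w i * D (ι i)|
      ≤ (ε + (L + M) / (N * r)) * ∑' i, (a i + 1) ^ 2 * w i := by
  have ha_nonneg : ∀ i, 0 ≤ a i := fun i => (norm_nonneg _).trans (ha i)
  have hM : 0 ≤ M := (norm_nonneg D).trans hD
  refine abs_mul_tsum_sub_tsum_le (A := L / N) (A' := M) hw hu (fun i => ?_) (fun i => ?_)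
    (fun i => ?_)
  · refine (hlip i).trans ?_
    rw [mul_div_right_comm]
    exact mul_le_mul_of_nonneg_left (le_add_one_sq (ha_nonneg i)) (by positivity)
  · exact (D.le_opNorm (ι i)).trans
      (mul_le_mul hD ((ha i).trans (le_add_one_sq (ha_nonneg i))) (norm_nonneg _) hM)
  · simpa only [smul_eq_mul, Real.norm_eq_abs] using
      norm_smul_sub_sub_apply_le hN hr hε hL hD (ha i) hsmall (hlip i)

theorem generator_uniform_convergence_general
    (d : ℕ)
    (K : Set (Fin d → ℝ)) (hK : IsCompact K)
    (U : Set (Fin d → ℝ)) (hU : IsOpen U) (hKU : K ⊆ U)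
    (ψ : (Fin d → ℝ) → ℝ) (hψ : ContDiffOn ℝ 1 ψ U)
    (I : Type*)
    (ι : I → (Fin d → ℝ))
    (w : (Fin d → ℝ) → I → ℝ)
    (hw : ∀ z i, 0 ≤ w z i)
    (hsummable : ∀ z ∈ K,
      Summable (fun i => ((∑ j, |ι i j|) + 1) ^ 2 * w z i))
    (C : ℝ)
    (hC : ∀ z ∈ K, (∑' i, ((∑ j, |ι i j|) + 1) ^ 2 * w z i) ≤ C)
    (L : ℝ)
    (hL : ∀ N : ℕ, 1 ≤ N → ∀ z ∈ K, ∀ i : I,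
      |ψ (z + ((N : ℝ))⁻¹ • ι i) - ψ z| ≤ L * (∑ j, |ι i j|) / N) :
    Tendsto
      (fun N : ℕ => ⨆ z : K,
        |(N : ℝ) * ∑' i, w z i * (ψ ((z : Fin d → ℝ) + ((N : ℝ))⁻¹ • ι i) - ψ z)
          - ∑' i, w z i * (fderiv ℝ ψ z (ι i))|)
      atTop (nhds 0) := by
  obtain ⟨M, hM⟩ := hK.exists_bound_of_continuousOn
    ((hψ.continuousOn_fderiv_of_isOpen hU le_rfl).mono hKU)
  have hl1 : ∀ i, ‖ι i‖ ≤ ∑ j, |ι i j| := fun i => by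
    simpa only [Real.norm_eq_abs] using pi_norm_le_sum_norm (ι i)
  refine tendsto_iSup_of_eventually_le_mul (fun _ _ => abs_nonneg _) (2 * C) fun ε hε => ?_
  obtain ⟨r, hr, hsmall⟩ := hK.exists_forall_norm_sub_sub_fderiv_le hU hKU hψ hε
  filter_upwards [eventually_ge_atTop 1, eventually_ge_atTop ⌈(max L 0 + M) / (r * ε)⌉₊]
    with N hN1 hN_large ⟨z, hz⟩
  have hN : (0 : ℝ) < N := by exact_mod_cast hN1
  have hq : (max L 0 + M) / (N * r) ≤ ε := by
    have hN_ge := Nat.ceil_le.1 hN_large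
    rw [div_le_iff₀ (by positivity)] at hN_ge ⊢
    linarith
  calc _ ≤ (ε + (max L 0 + M) / (N * r)) * ∑' i, ((∑ j, |ι i j|) + 1) ^ 2 * w z i :=
        abs_mul_tsum_sub_tsum_apply_le hN hr hε.le (le_max_right L 0) (hM z hz) hl1 (hw z)
          (hsummable z hz) (hsmall z hz)
          fun i => (hL N hN1 z hz i).trans (by gcongr; exact le_max_left L 0)
    _ ≤ (ε + ε) * C :=
        mul_le_mul (by linarith) (hC z hz)
          (tsum_nonneg fun i => mul_nonneg (sq_nonneg _) (hw z i)) (by linarith)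
    _ = ε * (2 * C) := by ring

/-- Uniform convergence of the rescaled discrete generator to the transport operator
(the analytic core of Proposition 4.4 of the paper): under the uniform ℓ² bound (A1) on
the weights and the Lipschitz property of `ψ`, the quantity
`N ∑'_i w z i (ψ(z + ι i / N) - ψ(z))` converges to `∑'_i w z i ⟨ι i, ∇ψ(z)⟩`
uniformly for `z` in the compact set `K`.  Here `‖v‖₁ = ∑ j, |v j|` is the ℓ¹ norm. -/
theorem generator_uniform_convergence
    (d : ℕ) (hd : 1 ≤ d)
    (K : Set (Fin d → ℝ)) (hK : IsCompact K)
    (U : Set (Fin d → ℝ)) (hU : IsOpen U) (hKU : K ⊆ U)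
    (ψ : (Fin d → ℝ) → ℝ) (hψ : ContDiffOn ℝ 1 ψ U)
    (I : Type*) [Countable I]
    (ι : I → (Fin d → ℝ))
    (w : (Fin d → ℝ) → I → ℝ)
    (hw : ∀ z i, 0 ≤ w z i)
    (hsummable : ∀ z ∈ K,
      Summable (fun i => ((∑ j, |ι i j|) + 1) ^ 2 * w z i))
    (C : ℝ)
    (hC : ∀ z ∈ K, (∑' i, ((∑ j, |ι i j|) + 1) ^ 2 * w z i) ≤ C)
    (L : ℝ)
    (hL : ∀ N : ℕ, 1 ≤ N → ∀ z ∈ K, ∀ i : I,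
      |ψ (z + ((N : ℝ))⁻¹ • ι i) - ψ z| ≤ L * (∑ j, |ι i j|) / N) :
    Tendsto
      (fun N : ℕ => ⨆ z : K,
        |(N : ℝ) * ∑' i, w z i * (ψ ((z : Fin d → ℝ) + ((N : ℝ))⁻¹ • ι i) - ψ z)
          - ∑' i, w z i * (fderiv ℝ ψ z (ι i))|)
      atTop (nhds 0) :=
  generator_uniform_convergence_general d K hK U hU hKU ψ hψ I ι w hw hsummable C hC L hL
end
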